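/- Let q_1 ≥ ... ≥ q_{k₁} and r_1 ≥ ... ≥ r_{k₂} be nonincreasing sequences of nonnegative reals, and let p_1 ≥ ... ≥ p_{k₁+k₂} be the nonincreasing rearrangement of the concatenation of the two sequences. Suppose C ≥ 0 satisfies: (1/i)·(∑_{j=1}^i q_j) − q_{i+1} ≤ C for all i ∈ {1,...,k₁−1}, (1/i)·(∑_{j=1}^i r_j) − r_{i+1} ≤ C for all i ∈ {1,...,k₂−1}, ∑_{j=1}^{k₁} q_j ≤ k₁·C, and ∑_{j=1}^{k₂} r_j ≤ k₂·C. Then (1/i)·(∑_{j=1}^i p_j) − p_{i+1} ≤ C for all i ∈ {1,...,k₁+k₂−1}. -/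

import Mathlib

/-!
Fix `i` and put `t = p (i + 1)`. Since `p` is sorted, its first `i` entries consist of the
entries of `q` at some set `A` of `a` indices and of `r` at some set `B` of `b` indices,
`a + b = i`, and every entry of `q` or `r` outside them is at most `t`. By an exchange argument
`∑_{A} q ≤ q₁ + ⋯ + q_a`. If `a < k₁`, some index `≤ a + 1` lies outside `A`, so
`q_{a+1} ≤ t` and balancedness of `q` gives `q₁ + ⋯ + q_a ≤ a (C + q_{a+1}) ≤ a (C + t)`;
if `a = k₁`, the bound `∑ q ≤ k₁ C` does the same since `t ≥ 0`. Likewise for `r`, and adding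
up gives `∑_{j ≤ i} p_j ≤ i (C + t)`.
-/

open Finset

def IsBalanced (q : ℕ → ℝ) (k : ℕ) (C : ℝ) : Prop :=
  ∀ i ∈ Icc 1 (k - 1), 1 / (i : ℝ) * ∑ j ∈ Icc 1 i, q j - q (i + 1) ≤ C

def concatSeq {α : Type*} (k : ℕ) (q r : ℕ → α) (s : ℕ) : α :=
  if s ≤ k then q s else r (s - k)

lemma one_div_mul_sub_le_iff {n : ℕ} (hn : 0 < n) {x y C : ℝ} :
    1 / (n : ℝ) * x - y ≤ C ↔ x ≤ n * (C + y) := by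
  rw [sub_le_iff_le_add, one_div, inv_mul_le_iff₀ (by exact_mod_cast hn)]

lemma sum_le_sum_Icc_card {q : ℕ → ℝ} {k : ℕ} (hq : AntitoneOn q (Set.Icc 1 k))
    {A : Finset ℕ} (hA : A ⊆ Icc 1 k) :
    ∑ s ∈ A, q s ≤ ∑ j ∈ Icc 1 #A, q j := by
  rcases Nat.eq_zero_or_pos #A with h0 | hpos
  · simp [card_eq_zero.mp h0]
  have hAk : #A ≤ k := by simpa using card_le_card hA
  -- exchange argument: `q #A` separates the values on `A \ I` from those on `I \ A`
  set I := Icc 1 #A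
  have hcard : #(A \ I) = #(I \ A) := card_sdiff_comm (by simp [I])
  have hout : ∀ s ∈ A \ I, q s ≤ q #A := fun s hs => by
    have hsk := mem_Icc.1 (hA (mem_sdiff.1 hs).1)
    have hsI : #A < s := by simpa [I, hsk.1] using (mem_sdiff.1 hs).2
    exact hq ⟨hpos, hAk⟩ hsk hsI.le
  have hin : ∀ j ∈ I \ A, q #A ≤ q j := fun j hj => by
    have hjI := mem_Icc.1 (mem_sdiff.1 hj).1
    exact hq ⟨hjI.1, hjI.2.trans hAk⟩ ⟨hpos, hAk⟩ hjI.2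
  have h₁ := sum_le_card_nsmul _ _ _ hout
  have h₂ := card_nsmul_le_sum _ _ _ hin
  rw [hcard] at h₁
  rw [← sub_nonneg, ← sum_sdiff_sub_sum_sdiff]
  linarith

section Balanced

variable {q : ℕ → ℝ} {k : ℕ} {C t : ℝ}

lemma IsBalanced.sum_Icc_le_mul (hbal : IsBalanced q k C) (hsum : ∑ j ∈ Icc 1 k, q j ≤ k * C)
    (ht : 0 ≤ t) {a : ℕ} (hak : a ≤ k) (hnext : a < k → q (a + 1) ≤ t) :
    ∑ j ∈ Icc 1 a, q j ≤ a * (C + t) := by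
  rcases Nat.eq_zero_or_pos a with rfl | hpos
  · simp
  rcases hak.eq_or_lt with rfl | hlt
  · have : (0 : ℝ) ≤ a * t := by positivity
    linarith
  · calc ∑ j ∈ Icc 1 a, q j ≤ a * (C + q (a + 1)) :=
          (one_div_mul_sub_le_iff hpos).1 (hbal a (mem_Icc.2 ⟨hpos, by omega⟩))
      _ ≤ a * (C + t) := by gcongr; exact hnext hlt

lemma IsBalanced.sum_le_card_mul (hbal : IsBalanced q k C) (hq : AntitoneOn q (Set.Icc 1 k))
    (hsum : ∑ j ∈ Icc 1 k, q j ≤ k * C) (ht : 0 ≤ t) {A : Finset ℕ} (hA : A ⊆ Icc 1 k)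
    (hout : ∀ j ∈ Icc 1 k, j ∉ A → q j ≤ t) :
    ∑ s ∈ A, q s ≤ #A * (C + t) := by
  refine (sum_le_sum_Icc_card hq hA).trans
    (hbal.sum_Icc_le_mul hsum ht (by simpa using card_le_card hA) fun hlt => ?_)
  obtain ⟨j, hj, hjA⟩ := exists_mem_notMem_of_card_lt_card (s := A) (t := Icc 1 (#A + 1))
    (by simp)
  have hj' := mem_Icc.1 hj
  exact (hq ⟨hj'.1, by omega⟩ ⟨by omega, hlt⟩ hj'.2).trans
    (hout j (mem_Icc.2 ⟨hj'.1, by omega⟩) hjA)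

end Balanced

section Concat

variable {α : Type*} {q r : ℕ → α} {k₁ k₂ : ℕ}

lemma concatSeq_of_le {s : ℕ} (hs : s ≤ k₁) : concatSeq k₁ q r s = q s := if_pos hs

lemma concatSeq_add {t : ℕ} (ht : 0 < t) : concatSeq k₁ q r (k₁ + t) = r t := by
  rw [concatSeq, if_neg (by omega), Nat.add_sub_cancel_left]

lemma concatSeq_nonneg [LE α] [Zero α] (hq : ∀ i ∈ Icc 1 k₁, 0 ≤ q i)
    (hr : ∀ i ∈ Icc 1 k₂, 0 ≤ r i) {s : ℕ} (hs : s ∈ Icc 1 (k₁ + k₂)) :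
    0 ≤ concatSeq k₁ q r s := by
  have hs' := mem_Icc.1 hs
  unfold concatSeq
  split_ifs with h
  · exact hq s (mem_Icc.2 ⟨hs'.1, h⟩)
  · exact hr _ (mem_Icc.2 ⟨by omega, by omega⟩)

lemma sum_concatSeq [AddCommMonoid α] (q r : ℕ → α) {S : Finset ℕ}
    (hS : S ⊆ Icc 1 (k₁ + k₂)) :
    ∑ s ∈ S, concatSeq k₁ q r s =
      ∑ s ∈ Icc 1 k₁ with s ∈ S, q s + ∑ t ∈ Icc 1 k₂ with k₁ + t ∈ S, r t := by
  have hleft : {s ∈ S | s ≤ k₁} = {s ∈ Icc 1 k₁ | s ∈ S} := by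
    ext s
    have := @hS s
    simp only [mem_filter, mem_Icc] at this ⊢
    grind
  have hright : {s ∈ S | ¬ s ≤ k₁} =
      {t ∈ Icc 1 k₂ | k₁ + t ∈ S}.map (addLeftEmbedding k₁) := by
    ext s
    have := @hS s
    simp only [mem_filter, mem_Icc, mem_map, addLeftEmbedding_apply] at this ⊢
    constructor
    · rintro ⟨hs, hk⟩
      exact ⟨s - k₁, by grind⟩
    · rintro ⟨t, ⟨ht, htS⟩, rfl⟩
      exact ⟨htS, by omega⟩
  rw [← sum_filter_add_sum_filter_not S (· ≤ k₁), hleft, hright, sum_map]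
  congr 1
  · exact sum_congr rfl fun s hs => concatSeq_of_le (mem_Icc.1 (mem_filter.1 hs).1).2
  · exact sum_congr rfl fun t ht => concatSeq_add (mem_Icc.1 (mem_filter.1 ht).1).1

end Concat

lemma sum_concatSeq_le_card_mul {q r : ℕ → ℝ} {k₁ k₂ : ℕ} {C t : ℝ}
    (hbq : IsBalanced q k₁ C) (hbr : IsBalanced r k₂ C)
    (hq : AntitoneOn q (Set.Icc 1 k₁)) (hr : AntitoneOn r (Set.Icc 1 k₂))
    (hsq : ∑ j ∈ Icc 1 k₁, q j ≤ k₁ * C) (hsr : ∑ j ∈ Icc 1 k₂, r j ≤ k₂ * C) (ht : 0 ≤ t)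
    {S : Finset ℕ} (hS : S ⊆ Icc 1 (k₁ + k₂))
    (hout : ∀ s ∈ Icc 1 (k₁ + k₂), s ∉ S → concatSeq k₁ q r s ≤ t) :
    ∑ s ∈ S, concatSeq k₁ q r s ≤ #S * (C + t) := by
  have hqA := hbq.sum_le_card_mul hq hsq ht (filter_subset (· ∈ S) _) fun j hj hjS => by
    have hj' := mem_Icc.1 hj
    rw [← concatSeq_of_le (q := q) (r := r) hj'.2]
    exact hout j (mem_Icc.2 ⟨hj'.1, by omega⟩) (by simpa [hj] using hjS)
  have hrB := hbr.sum_le_card_mul hr hsr ht (filter_subset (k₁ + · ∈ S) _) fun j hj hjS => by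
    have hj' := mem_Icc.1 hj
    rw [← concatSeq_add (q := q) (r := r) (k₁ := k₁) hj'.1]
    exact hout (k₁ + j) (mem_Icc.2 ⟨by omega, by omega⟩) (by simpa [hj] using hjS)
  have hcard : (#S : ℝ) = #{s ∈ Icc 1 k₁ | s ∈ S} + #{t ∈ Icc 1 k₂ | k₁ + t ∈ S} := by
    simpa [concatSeq] using sum_concatSeq (fun _ => (1 : ℝ)) (fun _ => 1) hS
  rw [sum_concatSeq q r hS, hcard, add_mul]
  exact add_le_add hqA hrB

section Rearrangement

variable {α : Type*} {σ : ℕ → ℕ} {N i : ℕ}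

lemma image_Icc_subset_of_bijOn (hσ : Set.BijOn σ (Icc 1 N : Set ℕ) (Icc 1 N : Set ℕ))
    (hi : i ≤ N) : (Icc 1 i).image σ ⊆ Icc 1 N := by
  intro s hs
  obtain ⟨j, hj, rfl⟩ := mem_image.1 hs
  exact_mod_cast hσ.mapsTo (mem_coe.2 (Icc_subset_Icc_right hi hj))

lemma card_image_Icc_of_bijOn (hσ : Set.BijOn σ (Icc 1 N : Set ℕ) (Icc 1 N : Set ℕ))
    (hi : i ≤ N) : #((Icc 1 i).image σ) = i := by
  rw [card_image_of_injOn (hσ.injOn.mono (coe_subset.2 (Icc_subset_Icc_right hi))),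
    Nat.card_Icc, Nat.add_sub_cancel]

lemma sum_Icc_eq_sum_image_of_bijOn [AddCommMonoid α] {g p : ℕ → α}
    (hσ : Set.BijOn σ (Icc 1 N : Set ℕ) (Icc 1 N : Set ℕ))
    (hp : ∀ j ∈ Icc 1 N, p j = g (σ j)) (hi : i ≤ N) :
    ∑ j ∈ Icc 1 i, p j = ∑ s ∈ (Icc 1 i).image σ, g s := by
  have hsub : (Icc 1 i : Set ℕ) ⊆ Icc 1 N := coe_subset.2 (Icc_subset_Icc_right hi)
  rw [sum_image fun x hx y hy => hσ.injOn (hsub hx) (hsub hy)]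
  exact sum_congr rfl fun j hj => hp j (Icc_subset_Icc_right hi hj)

lemma le_of_notMem_image_Icc_of_bijOn [Preorder α] {g p : ℕ → α}
    (hσ : Set.BijOn σ (Icc 1 N : Set ℕ) (Icc 1 N : Set ℕ))
    (hp : ∀ j ∈ Icc 1 N, p j = g (σ j)) (hpmono : AntitoneOn p (Set.Icc 1 N))
    (hi : i + 1 ≤ N) {s : ℕ} (hs : s ∈ Icc 1 N) (hsi : s ∉ (Icc 1 i).image σ) :
    g s ≤ p (i + 1) := by
  obtain ⟨j, hj, rfl⟩ := hσ.surjOn (mem_coe.2 hs)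
  have hj' := mem_Icc.1 (mem_coe.1 hj)
  have hij : i + 1 ≤ j := by
    by_contra h
    exact hsi (mem_image_of_mem σ (mem_Icc.2 ⟨hj'.1, by omega⟩))
  rw [← hp j hj]
  exact hpmono ⟨by omega, hi⟩ hj' hij

end Rearrangement

theorem parallel_composition_balanced_general (k₁ k₂ : ℕ)
    (q r p : ℕ → ℝ)
    (hq0 : ∀ i ∈ Finset.Icc 1 k₁, 0 ≤ q i)
    (hr0 : ∀ i ∈ Finset.Icc 1 k₂, 0 ≤ r i)
    (hqmono : ∀ i j, 1 ≤ i → i ≤ j → j ≤ k₁ → q j ≤ q i)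
    (hrmono : ∀ i j, 1 ≤ i → i ≤ j → j ≤ k₂ → r j ≤ r i)
    (hpmono : ∀ i j, 1 ≤ i → i ≤ j → j ≤ k₁ + k₂ → p j ≤ p i)
    (σ : ℕ → ℕ)
    (hbij : Set.BijOn σ (Finset.Icc 1 (k₁ + k₂) : Set ℕ) (Finset.Icc 1 (k₁ + k₂) : Set ℕ))
    (hperm : ∀ j ∈ Finset.Icc 1 (k₁ + k₂),
      p j = if σ j ≤ k₁ then q (σ j) else r (σ j - k₁))
    (C : ℝ)
    (hbq : ∀ i ∈ Finset.Icc 1 (k₁ - 1),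
      (1 / (i : ℝ)) * (∑ j ∈ Finset.Icc 1 i, q j) - q (i + 1) ≤ C)
    (hbr : ∀ i ∈ Finset.Icc 1 (k₂ - 1),
      (1 / (i : ℝ)) * (∑ j ∈ Finset.Icc 1 i, r j) - r (i + 1) ≤ C)
    (hsq : ∑ j ∈ Finset.Icc 1 k₁, q j ≤ (k₁ : ℝ) * C)
    (hsr : ∑ j ∈ Finset.Icc 1 k₂, r j ≤ (k₂ : ℝ) * C) :
    ∀ i ∈ Finset.Icc 1 (k₁ + k₂ - 1),
      (1 / (i : ℝ)) * (∑ j ∈ Finset.Icc 1 i, p j) - p (i + 1) ≤ C := by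
  intro i hi
  obtain ⟨hi1, hiN⟩ := mem_Icc.1 hi
  have hq : AntitoneOn q (Set.Icc 1 k₁) := fun a ha b hb hab => hqmono a b ha.1 hab hb.2
  have hr : AntitoneOn r (Set.Icc 1 k₂) := fun a ha b hb hab => hrmono a b ha.1 hab hb.2
  have hpanti : AntitoneOn p (Set.Icc 1 (k₁ + k₂)) := fun a ha b hb hab =>
    hpmono a b ha.1 hab hb.2
  have hp : ∀ j ∈ Icc 1 (k₁ + k₂), p j = concatSeq k₁ q r (σ j) := hperm
  have hnext : i + 1 ∈ Icc 1 (k₁ + k₂) := mem_Icc.2 ⟨by omega, by omega⟩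
  have ht : 0 ≤ p (i + 1) := by
    rw [hp _ hnext]
    exact concatSeq_nonneg hq0 hr0 (by exact_mod_cast hbij.mapsTo (mem_coe.2 hnext))
  have hsum := sum_concatSeq_le_card_mul hbq hbr hq hr hsq hsr ht
    (image_Icc_subset_of_bijOn hbij (by omega))
    fun s => le_of_notMem_image_Icc_of_bijOn hbij hp hpanti (mem_Icc.1 hnext).2
  rw [card_image_Icc_of_bijOn hbij (by omega)] at hsum
  rwa [one_div_mul_sub_le_iff hi1, sum_Icc_eq_sum_image_of_bijOn hbij hp (by omega)]

theorem parallel_composition_balanced (k₁ k₂ : ℕ) (hk₁ : 1 ≤ k₁) (hk₂ : 1 ≤ k₂)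
    (q r p : ℕ → ℝ)
    (hq0 : ∀ i ∈ Finset.Icc 1 k₁, 0 ≤ q i)
    (hr0 : ∀ i ∈ Finset.Icc 1 k₂, 0 ≤ r i)
    (hqmono : ∀ i j, 1 ≤ i → i ≤ j → j ≤ k₁ → q j ≤ q i)
    (hrmono : ∀ i j, 1 ≤ i → i ≤ j → j ≤ k₂ → r j ≤ r i)
    (hpmono : ∀ i j, 1 ≤ i → i ≤ j → j ≤ k₁ + k₂ → p j ≤ p i)
    (σ : ℕ → ℕ)
    (hbij : Set.BijOn σ (Finset.Icc 1 (k₁ + k₂) : Set ℕ) (Finset.Icc 1 (k₁ + k₂) : Set ℕ))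
    (hperm : ∀ j ∈ Finset.Icc 1 (k₁ + k₂),
      p j = if σ j ≤ k₁ then q (σ j) else r (σ j - k₁))
    (C : ℝ) (hC : 0 ≤ C)
    (hbq : ∀ i ∈ Finset.Icc 1 (k₁ - 1),
      (1 / (i : ℝ)) * (∑ j ∈ Finset.Icc 1 i, q j) - q (i + 1) ≤ C)
    (hbr : ∀ i ∈ Finset.Icc 1 (k₂ - 1),
      (1 / (i : ℝ)) * (∑ j ∈ Finset.Icc 1 i, r j) - r (i + 1) ≤ C)
    (hsq : ∑ j ∈ Finset.Icc 1 k₁, q j ≤ (k₁ : ℝ) * C)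
    (hsr : ∑ j ∈ Finset.Icc 1 k₂, r j ≤ (k₂ : ℝ) * C) :
    ∀ i ∈ Finset.Icc 1 (k₁ + k₂ - 1),
      (1 / (i : ℝ)) * (∑ j ∈ Finset.Icc 1 i, p j) - p (i + 1) ≤ C :=
  parallel_composition_balanced_general k₁ k₂ q r p hq0 hr0 hqmono hrmono hpmono σ hbij hperm C hbq
    hbr hsq hsr
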